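/- Let k ≥ 0 be an integer. On the upper half-plane ℍ = {τ ∈ ℂ : Im τ > 0}, define the Dedekind eta function η(τ) := e^{πiτ/12} ∏_{n=1}^∞ (1 − e^{2πinτ}) and the theta function of the A₁-lattice θ_{A₁}(τ) := ∑_{n∈ℤ} e^{2πin²τ}; η is nonvanishing on ℍ, so f₀(τ) := η(2τ)⁸ θ_{A₁}(τ)^k / (η(τ)⁸ η(4τ)⁸) is a well-defined holomorphic function on ℍ. Then there exists a constant C > 0 such that for all τ ∈ ℍ with Im τ ≥ 1, | f₀(τ) − e^{−2πiτ} − (8 + 2k) | ≤ C e^{−2π Im τ}. -/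

import Mathlib

/-- The Dedekind eta function `η(τ) = e^{πiτ/12} ∏_{n≥1} (1 - e^{2πinτ})`. -/
noncomputable def eta (τ : ℂ) : ℂ :=
  Complex.exp ((Real.pi : ℂ) * Complex.I * τ / 12) *
    ∏' n : ℕ, (1 - Complex.exp (2 * (Real.pi : ℂ) * Complex.I * ((n : ℂ) + 1) * τ))

/-- The theta function of the `A₁`-lattice, `θ_{A₁}(τ) = ∑_{n∈ℤ} e^{2πin²τ}`. -/
noncomputable def thetaA1 (τ : ℂ) : ℂ :=
  ∑' n : ℤ, Complex.exp (2 * (Real.pi : ℂ) * Complex.I * (n : ℂ) ^ 2 * τ)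

/-- The eta-theta quotient `f₀(τ) = η(2τ)⁸ θ_{A₁}(τ)^k / (η(τ)⁸ η(4τ)⁸)` of (8.9). -/
noncomputable def f0 (k : ℕ) (τ : ℂ) : ℂ :=
  eta (2 * τ) ^ 8 * thetaA1 τ ^ k / (eta τ ^ 8 * eta (4 * τ) ^ 8)

open Complex

/- ----------------- auxiliary lemmas ----------------- -/

/-- Geometric-tail bound for a tsum. -/
lemma geom_norm_tsum {f : ℕ → ℂ} {C x : ℝ} (hx0 : 0 ≤ x) (hx : x ≤ 1/2) (hC : 0 ≤ C)
    (hf : ∀ n, ‖f n‖ ≤ C * x ^ (n+1)) :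
    Summable f ∧ ‖∑' n, f n‖ ≤ 2 * C * x := by
  have hx1 : x < 1 := lt_of_le_of_lt hx (by norm_num)
  have hg : Summable (fun n : ℕ => C * x ^ (n+1)) := by
    refine ((summable_geometric_of_lt_one hx0 hx1).mul_left (C * x)).congr fun n => ?_
    rw [pow_succ]; ring
  have hs : Summable f := Summable.of_norm_bounded hg hf
  have hsn : Summable (fun n => ‖f n‖) := Summable.of_nonneg_of_le (fun n => norm_nonneg _) hf hg
  refine ⟨hs, ?_⟩
  have h1 : ‖∑' n, f n‖ ≤ ∑' n, ‖f n‖ := norm_tsum_le_tsum_norm hsn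
  have h2 : ∑' n, ‖f n‖ ≤ ∑' n, C * x ^ (n+1) := Summable.tsum_le_tsum hf hsn hg
  have h3 : ∑' n : ℕ, C * x ^ (n+1) = (C * x) * (1 - x)⁻¹ := by
    have : ∀ n : ℕ, C * x ^ (n+1) = (C * x) * x ^ n := fun n => by rw [pow_succ]; ring
    rw [tsum_congr this, tsum_mul_left, tsum_geometric_of_lt_one hx0 hx1]
  have h4 : (1 - x)⁻¹ ≤ 2 := by
    rw [show (2:ℝ) = (1/2 : ℝ)⁻¹ by norm_num]
    exact inv_anti₀ (by norm_num) (by linarith)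
  calc ‖∑' n, f n‖ ≤ (C * x) * (1 - x)⁻¹ := by rw [← h3]; exact h1.trans h2
    _ ≤ (C * x) * 2 := by
        have : 0 ≤ C * x := mul_nonneg hC hx0
        nlinarith
    _ = 2 * C * x := by ring

/-- Binomial second-order bound. -/
lemma pow_one_add_approx (k : ℕ) {x : ℂ} (hx : ‖x‖ ≤ 1) :
    ‖(1 + x) ^ k - 1 - (k : ℂ) * x‖ ≤ ((2:ℝ) ^ k - k - 1) * ‖x‖ ^ 2 := by
  induction k with
  | zero => simp
  | succ n ih =>
    have hnn : (0:ℝ) ≤ (2:ℝ)^n - n - 1 := by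
      have : (n : ℝ) + 1 ≤ 2 ^ n := by exact_mod_cast (Nat.lt_two_pow_self (n := n))
      linarith
    have key : (1 + x) ^ (n+1) - 1 - ((n+1 : ℕ) : ℂ) * x
        = (1 + x) * ((1 + x) ^ n - 1 - (n : ℂ) * x) + (n : ℂ) * x ^ 2 := by
      push_cast; ring
    rw [key]
    have h1x : ‖(1:ℂ) + x‖ ≤ 2 := by
      calc ‖(1:ℂ) + x‖ ≤ ‖(1:ℂ)‖ + ‖x‖ := norm_add_le _ _
        _ ≤ 2 := by rw [norm_one]; linarith
    calc ‖(1 + x) * ((1 + x) ^ n - 1 - (n : ℂ) * x) + (n : ℂ) * x ^ 2‖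
        ≤ ‖(1 + x) * ((1 + x) ^ n - 1 - (n : ℂ) * x)‖ + ‖(n : ℂ) * x ^ 2‖ := norm_add_le _ _
      _ = ‖(1:ℂ) + x‖ * ‖(1 + x) ^ n - 1 - (n : ℂ) * x‖ + (n : ℝ) * ‖x‖ ^ 2 := by
          rw [norm_mul, norm_mul, norm_pow]; simp
      _ ≤ 2 * (((2:ℝ) ^ n - n - 1) * ‖x‖ ^ 2) + (n : ℝ) * ‖x‖ ^ 2 := by
          gcongr
      _ ≤ ((2:ℝ) ^ (n+1) - ((n:ℝ)+1) - 1) * ‖x‖ ^ 2 := by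
          ring_nf; nlinarith [sq_nonneg ‖x‖]
      _ = ((2:ℝ) ^ (n+1) - ((n+1:ℕ):ℝ) - 1) * ‖x‖ ^ 2 := by push_cast; ring

lemma log_term_bound {w : ℂ} (hw : ‖w‖ ≤ 1/2) (n : ℕ) :
    ‖Complex.log (1 - w ^ (n+1))‖ ≤ (3/2) * ‖w‖ ^ (n+1) := by
  have hpow : ‖w‖ ^ (n+1) ≤ ‖w‖ := by
    calc ‖w‖^(n+1) ≤ ‖w‖^1 :=
      pow_le_pow_of_le_one (norm_nonneg w) (hw.trans (by norm_num)) (by omega)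
    _ = ‖w‖ := pow_one _
  have h1 : ‖-(w^(n+1))‖ ≤ 1/2 := by
    rw [norm_neg, norm_pow]; exact hpow.trans hw
  have h := Complex.norm_log_one_add_half_le_self h1
  rw [norm_neg, norm_pow] at h
  rw [sub_eq_add_neg]
  exact h

lemma term_ne_zero {w : ℂ} (hw : ‖w‖ ≤ 1/2) (n : ℕ) : (1 : ℂ) - w ^ (n+1) ≠ 0 := by
  intro h
  have heq : (1:ℂ) = w ^ (n+1) := by linear_combination h
  have h2 : ‖w ^ (n+1)‖ ≤ 1/2 := by
    rw [norm_pow]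
    calc ‖w‖^(n+1) ≤ ‖w‖^1 :=
      pow_le_pow_of_le_one (norm_nonneg w) (hw.trans (by norm_num)) (by omega)
    _ ≤ 1/2 := by rw [pow_one]; exact hw
  rw [← heq] at h2
  norm_num at h2

lemma log_summable {w : ℂ} (hw : ‖w‖ ≤ 1/2) :
    Summable (fun n : ℕ => Complex.log (1 - w ^ (n+1))) :=
  (geom_norm_tsum (norm_nonneg w) hw (by norm_num) (log_term_bound hw)).1

lemma log_tsum_bound {w : ℂ} (hw : ‖w‖ ≤ 1/2) :
    ‖∑' n : ℕ, Complex.log (1 - w ^ (n+1))‖ ≤ 3 * ‖w‖ := by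
  have := (geom_norm_tsum (norm_nonneg w) hw (by norm_num : (0:ℝ) ≤ 3/2) (log_term_bound hw)).2
  linarith

lemma prod_eq_exp_log {w : ℂ} (hw : ‖w‖ ≤ 1/2) :
    ∏' n : ℕ, (1 - w ^ (n+1)) = Complex.exp (∑' n : ℕ, Complex.log (1 - w ^ (n+1))) := by
  have := Complex.cexp_tsum_eq_tprod (fun n => term_ne_zero hw n) (log_summable hw)
  exact this.symm

lemma log_tsum_tail {w : ℂ} (hw : ‖w‖ ≤ 1/2) :
    ‖(∑' n : ℕ, Complex.log (1 - w ^ (n+1))) - Complex.log (1 - w)‖ ≤ 3 * ‖w‖ ^ 2 := by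
  have hsum := log_summable hw
  have hsplit : (∑' n : ℕ, Complex.log (1 - w ^ (n+1)))
      = Complex.log (1 - w ^ (0+1)) + ∑' n : ℕ, Complex.log (1 - w ^ ((n+1)+1)) :=
    Summable.tsum_eq_zero_add hsum
  have htail : ‖∑' n : ℕ, Complex.log (1 - w ^ (n+2))‖ ≤ 2 * ((3/2) * ‖w‖) * ‖w‖ := by
    refine (geom_norm_tsum (norm_nonneg w) hw (by positivity) (fun n => ?_)).2
    have := log_term_bound hw (n+1)
    calc ‖Complex.log (1 - w ^ (n+2))‖ ≤ (3/2) * ‖w‖ ^ (n+2) := this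
      _ = (3/2) * ‖w‖ * ‖w‖ ^ (n+1) := by ring
  rw [hsplit]
  simp only [pow_one, zero_add]
  have heq : Complex.log (1 - w) + (∑' n : ℕ, Complex.log (1 - w ^ (n + 1 + 1)))
      - Complex.log (1 - w) = ∑' n : ℕ, Complex.log (1 - w ^ (n + 2)) := by
    rw [add_sub_cancel_left]
  rw [heq]
  calc ‖∑' n : ℕ, Complex.log (1 - w ^ (n+2))‖ ≤ 2 * ((3/2) * ‖w‖) * ‖w‖ := htail
    _ = 3 * ‖w‖ ^ 2 := by ring

/-- Multiplying two first-order approximations `x ≈ 1 + a q`, `y ≈ 1 + b q`. -/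
lemma mul_approx {q : ℂ} {r : ℝ} (hq : ‖q‖ ≤ r) (hr : r ≤ 1/400)
    {x y a b : ℂ} {A B c d : ℝ} (hA : ‖a‖ ≤ A) (hB : ‖b‖ ≤ B) (hc : 0 ≤ c) (hd : 0 ≤ d)
    (hd' : d ≤ 160000)
    (hx : ‖x - 1 - a*q‖ ≤ c * r^2) (hy : ‖y - 1 - b*q‖ ≤ d * r^2) :
    ‖x*y - 1 - (a+b)*q‖ ≤ (A*B + c*(2+B) + d*(1+A)) * r^2 := by
  have hr0 : 0 ≤ r := (norm_nonneg q).trans hq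
  have hr1 : r ≤ 1 := hr.trans (by norm_num)
  have hr2 : r^2 ≤ 1/160000 := by nlinarith
  have hA0 : 0 ≤ A := (norm_nonneg a).trans hA
  have hB0 : 0 ≤ B := (norm_nonneg b).trans hB
  have hq1 : ‖q‖ ≤ 1 := hq.trans hr1
  have hyn : ‖y‖ ≤ 2 + B := by
    have h1 : ‖y‖ ≤ ‖y - 1 - b*q‖ + ‖1 + b*q‖ := by
      calc ‖y‖ = ‖(y - 1 - b*q) + (1 + b*q)‖ := by ring_nf
        _ ≤ ‖y - 1 - b*q‖ + ‖1 + b*q‖ := norm_add_le _ _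
    have h2 : ‖(1:ℂ) + b*q‖ ≤ 1 + B := by
      calc ‖(1:ℂ) + b*q‖ ≤ ‖(1:ℂ)‖ + ‖b‖*‖q‖ := by
            refine (norm_add_le _ _).trans ?_; rw [norm_mul]
        _ ≤ 1 + B := by
            rw [norm_one]
            have : ‖b‖*‖q‖ ≤ B*1 := mul_le_mul hB hq1 (norm_nonneg _) hB0
            linarith
    have h3 : d * r^2 ≤ 1 := by nlinarith
    linarith
  have h1aq : ‖(1:ℂ) + a*q‖ ≤ 1 + A := by
    calc ‖(1:ℂ) + a*q‖ ≤ ‖(1:ℂ)‖ + ‖a‖*‖q‖ := by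
          refine (norm_add_le _ _).trans ?_; rw [norm_mul]
      _ ≤ 1 + A := by
          rw [norm_one]
          have : ‖a‖*‖q‖ ≤ A*1 := mul_le_mul hA hq1 (norm_nonneg _) hA0
          linarith
  have key : x*y - 1 - (a+b)*q
      = (x - 1 - a*q)*y + (1 + a*q)*(y - 1 - b*q) + a*b*q^2 := by ring
  rw [key]
  have e1 : ‖(x - 1 - a*q)*y‖ ≤ (c * r^2) * (2 + B) := by
    rw [norm_mul]
    exact mul_le_mul hx hyn (norm_nonneg _) (by positivity)
  have e2 : ‖(1 + a*q)*(y - 1 - b*q)‖ ≤ (1 + A) * (d * r^2) := by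
    rw [norm_mul]
    exact mul_le_mul h1aq hy (norm_nonneg _) (by positivity)
  have e3 : ‖a*b*q^2‖ ≤ A*B*r^2 := by
    rw [norm_mul, norm_mul, norm_pow]
    have hqq : ‖q‖^2 ≤ r^2 := by nlinarith [norm_nonneg q]
    have hab : ‖a‖*‖b‖ ≤ A*B := mul_le_mul hA hB (norm_nonneg _) hA0
    exact mul_le_mul hab hqq (sq_nonneg _) (mul_nonneg hA0 hB0)
  calc ‖(x - 1 - a*q)*y + (1 + a*q)*(y - 1 - b*q) + a*b*q^2‖
      ≤ ‖(x - 1 - a*q)*y + (1 + a*q)*(y - 1 - b*q)‖ + ‖a*b*q^2‖ := norm_add_le _ _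
    _ ≤ ‖(x - 1 - a*q)*y‖ + ‖(1 + a*q)*(y - 1 - b*q)‖ + ‖a*b*q^2‖ := by
        have := norm_add_le ((x - 1 - a*q)*y) ((1 + a*q)*(y - 1 - b*q)); linarith
    _ ≤ (c * r^2) * (2 + B) + (1 + A) * (d * r^2) + A*B*r^2 := by linarith
    _ = (A*B + c*(2+B) + d*(1+A)) * r^2 := by ring

lemma eta_nat_mul (τ : ℂ) (m : ℕ) :
    _root_.eta ((m : ℂ) * τ) = Complex.exp ((Real.pi : ℂ) * Complex.I * ((m : ℂ) * τ) / 12) *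
      ∏' n : ℕ, (1 - (Complex.exp (2 * (Real.pi : ℂ) * Complex.I * τ) ^ m) ^ (n+1)) := by
  unfold _root_.eta
  congr 1
  refine tprod_congr fun n => ?_
  congr 1
  rw [← pow_mul, ← Complex.exp_nat_mul]
  congr 1
  push_cast
  ring

lemma thetaA1_eq (τ : ℂ) : thetaA1 τ = jacobiTheta (2 * τ) := by
  unfold thetaA1 jacobiTheta
  refine tsum_congr fun n => ?_
  congr 1
  ring

lemma theta_approx {τ : ℂ} (ht : 0 < τ.im)
    (hq : ‖Complex.exp (2 * (Real.pi : ℂ) * Complex.I * τ)‖ ≤ 1/2) :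
    ‖thetaA1 τ - 1 - 2 * Complex.exp (2 * (Real.pi : ℂ) * Complex.I * τ)‖
      ≤ 4 * ‖Complex.exp (2 * (Real.pi : ℂ) * Complex.I * τ)‖ ^ 4 := by
  set q : ℂ := Complex.exp (2 * (Real.pi : ℂ) * Complex.I * τ) with hqdef
  have h2t : 0 < (2 * τ).im := by
    simp only [Complex.mul_im, Complex.re_ofNat, Complex.im_ofNat]
    nlinarith
  have hterm : ∀ n : ℕ, cexp ((Real.pi : ℂ) * I * ((n : ℂ) + 1) ^ 2 * (2 * τ)) = q ^ ((n+1)^2) := by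
    intro n
    rw [hqdef, ← Complex.exp_nat_mul]
    congr 1
    push_cast
    ring
  have hS : HasSum (fun n : ℕ => q ^ ((n+1)^2)) ((jacobiTheta (2*τ) - 1) / 2) := by
    have h := hasSum_nat_jacobiTheta h2t
    have heq : (fun n : ℕ => cexp ((Real.pi : ℂ) * I * ((n : ℂ) + 1) ^ 2 * (2 * τ)))
        = fun n : ℕ => q ^ ((n+1)^2) := funext hterm
    rwa [heq] at h
  have htail : HasSum (fun n : ℕ => q ^ ((n+1+1)^2)) ((jacobiTheta (2*τ) - 1) / 2 - q) := by
    have h := (hasSum_nat_add_iff' (f := fun n : ℕ => q ^ ((n+1)^2)) 1).mpr hS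
    simp only [Finset.range_one, Finset.sum_singleton] at h
    norm_num at h
    exact h
  have hnorm : ‖(jacobiTheta (2*τ) - 1) / 2 - q‖ ≤ 2 * ‖q‖^3 * ‖q‖ := by
    rw [← htail.tsum_eq]
    refine (geom_norm_tsum (norm_nonneg q) hq (by positivity) fun n => ?_).2
    rw [norm_pow]
    calc ‖q‖ ^ ((n+1+1)^2) ≤ ‖q‖ ^ (n+4) := by
          refine pow_le_pow_of_le_one (norm_nonneg q) (hq.trans (by norm_num)) ?_
          nlinarith
      _ = ‖q‖^3 * ‖q‖^(n+1) := by rw [← pow_add]; congr 1; omega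
  have hid : thetaA1 τ - 1 - 2 * q = 2 * ((jacobiTheta (2*τ) - 1) / 2 - q) := by
    rw [thetaA1_eq]; ring
  rw [hid, norm_mul]
  simp only [Complex.norm_ofNat]
  nlinarith [norm_nonneg q, hnorm]

set_option maxHeartbeats 1600000 in
/-- Claim (8.9): `f₀(τ) = q⁻¹ + 8 + 2k + O(q)` with `q = e^{2πiτ}`. -/
theorem stmt_7 (k : ℕ) :
    ∃ C : ℝ, 0 < C ∧ ∀ τ : ℂ, 1 ≤ τ.im →
      ‖f0 k τ - Complex.exp (-(2 * (Real.pi : ℂ) * Complex.I * τ)) - (8 + 2 * (k : ℂ))‖ ≤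
        C * Real.exp (-(2 * Real.pi * τ.im)) := by
  refine ⟨36*2^k + 4864*(k:ℝ) + 18681, by positivity, ?_⟩
  intro τ htim
  have htpos : 0 < τ.im := lt_of_lt_of_le one_pos htim
  set q : ℂ := Complex.exp (2 * (Real.pi : ℂ) * Complex.I * τ) with hqdef
  set r : ℝ := Real.exp (-(2 * Real.pi * τ.im)) with hrdef
  have hre : (2 * (Real.pi : ℂ) * Complex.I * τ).re = -(2 * Real.pi * τ.im) := by
    simp [Complex.mul_re, Complex.mul_im]
  have hqr : ‖q‖ = r := by
    rw [hqdef, Complex.norm_exp, hre]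
  have hr0 : 0 < r := Real.exp_pos _
  have hπ : (3:ℝ) < Real.pi := Real.pi_gt_three
  have hexp6 : (400:ℝ) ≤ Real.exp 6 := by
    have h1 : (2.7182818283:ℝ)^6 ≤ (Real.exp 1)^6 :=
      pow_le_pow_left₀ (by norm_num) Real.exp_one_gt_d9.le 6
    have h2 : Real.exp 1 ^ 6 = Real.exp 6 := by
      rw [← Real.exp_nat_mul]; norm_num
    nlinarith [h1]
  have hr400 : r ≤ 1/400 := by
    have h1 : r ≤ Real.exp (-(6:ℝ)) := by
      apply Real.exp_le_exp.mpr
      nlinarith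
    have h2 : Real.exp (-(6:ℝ)) = (Real.exp 6)⁻¹ := Real.exp_neg 6
    have h3 : (Real.exp 6)⁻¹ ≤ (400:ℝ)⁻¹ := inv_anti₀ (by norm_num) hexp6
    rw [h2] at h1
    calc r ≤ (Real.exp 6)⁻¹ := h1
      _ ≤ (400:ℝ)⁻¹ := h3
      _ = 1/400 := by norm_num
  have hr1 : r ≤ 1 := hr400.trans (by norm_num)
  have hrr : r^2 ≤ r*(1/400) := by
    rw [pow_two]; exact mul_le_mul_of_nonneg_left hr400 hr0.le
  have hrpow : ∀ m : ℕ, 1 ≤ m → r^m ≤ r := by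
    intro m hm
    calc r^m ≤ r^1 := pow_le_pow_of_le_one hr0.le hr1 hm
      _ = r := pow_one r
  have hq12 : ‖q‖ ≤ 1/2 := by rw [hqr]; linarith
  have hq22 : ‖q^2‖ ≤ 1/2 := by
    rw [norm_pow, hqr]; exact (hrpow 2 (by omega)).trans (by linarith)
  have hq42 : ‖q^4‖ ≤ 1/2 := by
    rw [norm_pow, hqr]; exact (hrpow 4 (by omega)).trans (by linarith)
  -- infinite products
  set P1 : ℂ := ∏' n : ℕ, (1 - q ^ (n+1)) with hP1def
  set P2 : ℂ := ∏' n : ℕ, (1 - (q^2) ^ (n+1)) with hP2def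
  set P4 : ℂ := ∏' n : ℕ, (1 - (q^4) ^ (n+1)) with hP4def
  set L1 : ℂ := ∑' n : ℕ, Complex.log (1 - q ^ (n+1)) with hL1def
  set L2 : ℂ := ∑' n : ℕ, Complex.log (1 - (q^2) ^ (n+1)) with hL2def
  set L4 : ℂ := ∑' n : ℕ, Complex.log (1 - (q^4) ^ (n+1)) with hL4def
  have hP1 : P1 = cexp L1 := prod_eq_exp_log hq12
  have hP2 : P2 = cexp L2 := prod_eq_exp_log hq22
  have hP4 : P4 = cexp L4 := prod_eq_exp_log hq42
  have hP1ne : P1 ≠ 0 := by rw [hP1]; exact Complex.exp_ne_zero _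
  have hP4ne : P4 ≠ 0 := by rw [hP4]; exact Complex.exp_ne_zero _
  -- eta values
  have hη1 : _root_.eta τ = cexp ((Real.pi:ℂ) * I * τ / 12) * P1 := by
    have h := eta_nat_mul τ 1
    rw [← hqdef] at h
    simpa using h
  have hη2 : _root_.eta (2*τ) = cexp ((Real.pi:ℂ) * I * (2*τ) / 12) * P2 := by
    have h := eta_nat_mul τ 2
    rw [← hqdef] at h
    push_cast at h
    exact h
  have hη4 : _root_.eta (4*τ) = cexp ((Real.pi:ℂ) * I * (4*τ) / 12) * P4 := by
    have h := eta_nat_mul τ 4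
    rw [← hqdef] at h
    push_cast at h
    exact h
  set θk : ℂ := thetaA1 τ ^ k with hθkdef
  have hpow8 : ∀ z : ℂ, cexp z ^ 8 = cexp (8 * z) := by
    intro z
    rw [← Complex.exp_nat_mul]
    norm_num
  have hE : cexp ((Real.pi:ℂ) * I * (2*τ) / 12)^8
      = cexp (-(2*(Real.pi:ℂ)*I*τ)) *
        (cexp ((Real.pi:ℂ) * I * τ / 12)^8 * cexp ((Real.pi:ℂ) * I * (4*τ) / 12)^8) := by
    rw [hpow8, hpow8, hpow8, ← Complex.exp_add, ← Complex.exp_add]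
    congr 1
    ring
  have hqexp : cexp (-(2*(Real.pi:ℂ)*I*τ)) = q⁻¹ := by
    rw [Complex.exp_neg, ← hqdef]
  have hf0 : f0 k τ = cexp (-(2*(Real.pi:ℂ)*I*τ)) * ((P2^8 * θk) / (P1^8 * P4^8)) := by
    unfold f0
    rw [hη1, hη2, hη4, mul_pow, mul_pow, mul_pow, hE, ← hθkdef]
    have hne1 : cexp ((Real.pi:ℂ) * I * τ / 12) ≠ 0 := Complex.exp_ne_zero _
    have hne4 : cexp ((Real.pi:ℂ) * I * (4*τ) / 12) ≠ 0 := Complex.exp_ne_zero _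
    field_simp
  -- P1^8 = (1-q)^8 * XT
  set XT : ℂ := cexp (8 * (L1 - Complex.log (1 - q))) with hXTdef
  have h1q : (1:ℂ) - q ≠ 0 := by
    have := term_ne_zero hq12 0
    simpa using this
  have hP18 : P1^8 = (1-q)^8 * XT := by
    rw [hP1, hpow8, hXTdef,
      show (8:ℂ) * L1 = 8 * Complex.log (1-q) + 8*(L1 - Complex.log (1-q)) by ring,
      Complex.exp_add]
    congr 1
    rw [← hpow8, Complex.exp_log h1q]
  -- exp-near-one tool
  have hexp1 : ∀ z : ℂ, ‖z‖ ≤ 1 → ‖cexp z - 1‖ ≤ 2*‖z‖ := by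
    intro z hz
    have := Complex.norm_exp_sub_one_le (x := z) hz
    simpa using this
  have hr2small : (24:ℝ)*r^2 ≤ 1 := by nlinarith
  -- approximations of the three exp-factors
  have hX2 : ‖P2^8 - 1 - (0:ℂ)*q‖ ≤ 48 * r^2 := by
    have hL2b : ‖L2‖ ≤ 3 * r^2 := by
      have h := log_tsum_bound hq22
      rw [← hL2def, norm_pow, hqr] at h
      exact h
    have h8 : ‖(8:ℂ)*L2‖ ≤ 24*r^2 := by
      rw [norm_mul, Complex.norm_ofNat]; linarith
    rw [hP2, hpow8]
    simp only [zero_mul, sub_zero]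
    calc ‖cexp ((8:ℂ)*L2) - 1‖ ≤ 2*‖(8:ℂ)*L2‖ := hexp1 _ (h8.trans hr2small)
      _ ≤ 48*r^2 := by linarith
  have hX4 : ‖P4^8 - 1 - (0:ℂ)*q‖ ≤ 48 * r^2 := by
    have hL4b : ‖L4‖ ≤ 3 * r^2 := by
      have h := log_tsum_bound hq42
      rw [← hL4def, norm_pow, hqr] at h
      have : r^4 ≤ r^2 := pow_le_pow_of_le_one hr0.le hr1 (by omega)
      nlinarith [norm_nonneg (q^4)]
    have h8 : ‖(8:ℂ)*L4‖ ≤ 24*r^2 := by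
      rw [norm_mul, Complex.norm_ofNat]; linarith
    rw [hP4, hpow8]
    simp only [zero_mul, sub_zero]
    calc ‖cexp ((8:ℂ)*L4) - 1‖ ≤ 2*‖(8:ℂ)*L4‖ := hexp1 _ (h8.trans hr2small)
      _ ≤ 48*r^2 := by linarith
  have hXT : ‖XT - 1 - (0:ℂ)*q‖ ≤ 48 * r^2 := by
    have hTb : ‖L1 - Complex.log (1-q)‖ ≤ 3 * r^2 := by
      have h := log_tsum_tail hq12
      rw [← hL1def, hqr] at h
      nlinarith [norm_nonneg q]
    have h8 : ‖(8:ℂ)*(L1 - Complex.log (1-q))‖ ≤ 24*r^2 := by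
      rw [norm_mul, Complex.norm_ofNat]; linarith
    rw [hXTdef]
    simp only [zero_mul, sub_zero]
    calc ‖cexp ((8:ℂ)*(L1 - Complex.log (1-q))) - 1‖ ≤ 2*‖(8:ℂ)*(L1 - Complex.log (1-q))‖ :=
          hexp1 _ (h8.trans hr2small)
      _ ≤ 48*r^2 := by linarith
  -- (1-q)^8
  have hb8 : ‖(1-q)^8 - 1 - (-8:ℂ)*q‖ ≤ 247 * r^2 := by
    have h := pow_one_add_approx 8 (x := -q) (by rw [norm_neg, hqr]; linarith)
    rw [norm_neg, hqr] at h
    calc ‖(1-q)^8 - 1 - (-8:ℂ)*q‖ = ‖(1 + -q)^8 - 1 - ((8:ℕ):ℂ)*(-q)‖ := by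
          congr 1; push_cast; ring
      _ ≤ ((2:ℝ)^8 - (8:ℕ) - 1)*r^2 := h
      _ ≤ 247*r^2 := by norm_num
  -- theta approximation
  have hθapp : ‖thetaA1 τ - 1 - 2*q‖ ≤ 4*r^2 := by
    have h := theta_approx htpos hq12
    rw [← hqdef, hqr] at h
    have h4 : r^4 ≤ r^2 := pow_le_pow_of_le_one hr0.le hr1 (by omega)
    linarith [h]
  have hu : ‖thetaA1 τ - 1‖ ≤ 3*r := by
    have h1 : ‖thetaA1 τ - 1‖ ≤ ‖thetaA1 τ - 1 - 2*q‖ + ‖(2:ℂ)*q‖ := by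
      calc ‖thetaA1 τ - 1‖ = ‖(thetaA1 τ - 1 - 2*q) + (2:ℂ)*q‖ := by congr 1; ring
        _ ≤ _ := norm_add_le _ _
    have h2 : ‖(2:ℂ)*q‖ = 2*r := by rw [norm_mul, Complex.norm_ofNat, hqr]
    linarith [hθapp, hrr]
  have hu1 : ‖thetaA1 τ - 1‖ ≤ 1 := by linarith [hr400]
  clear_value P1 P2 P4 L1 L2 L4 XT θk
  have hθk : ‖θk - 1 - 2*(k:ℂ)*q‖ ≤ (9*(2:ℝ)^k + 4*(k:ℝ))*r^2 := by
    have hb := pow_one_add_approx k hu1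
    rw [show (1:ℂ) + (thetaA1 τ - 1) = thetaA1 τ by ring] at hb
    have hsq : ‖thetaA1 τ - 1‖^2 ≤ 9*r^2 := by nlinarith [norm_nonneg (thetaA1 τ - 1)]
    have hcb : ((2:ℝ)^k - k - 1) ≤ (2:ℝ)^k := by
      have : (0:ℝ) ≤ (k:ℝ) := Nat.cast_nonneg k
      linarith
    have hcb0 : (0:ℝ) ≤ (2:ℝ)^k - k - 1 := by
      have : (k:ℝ)+1 ≤ 2^k := by exact_mod_cast (Nat.lt_two_pow_self (n := k))
      linarith
    have h1 : ((2:ℝ)^k - k - 1)*‖thetaA1 τ - 1‖^2 ≤ (2:ℝ)^k * (9*r^2) :=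
      mul_le_mul hcb hsq (sq_nonneg _) (by positivity)
    have hdecomp : θk - 1 - 2*(k:ℂ)*q
        = (thetaA1 τ ^ k - 1 - (k:ℂ)*(thetaA1 τ - 1)) + (k:ℂ)*((thetaA1 τ - 1) - 2*q) := by
      rw [hθkdef]; ring
    rw [hdecomp]
    have h2 : ‖(k:ℂ)*((thetaA1 τ - 1) - 2*q)‖ ≤ (k:ℝ)*(4*r^2) := by
      rw [norm_mul, Complex.norm_natCast]
      exact mul_le_mul_of_nonneg_left hθapp (Nat.cast_nonneg k)
    calc ‖(thetaA1 τ ^ k - 1 - (k:ℂ)*(thetaA1 τ - 1)) + (k:ℂ)*((thetaA1 τ - 1) - 2*q)‖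
        ≤ ‖thetaA1 τ ^ k - 1 - (k:ℂ)*(thetaA1 τ - 1)‖ + ‖(k:ℂ)*((thetaA1 τ - 1) - 2*q)‖ :=
          norm_add_le _ _
      _ ≤ (2:ℝ)^k * (9*r^2) + (k:ℝ)*(4*r^2) := by linarith [hb.trans h1]
      _ = (9*(2:ℝ)^k + 4*(k:ℝ))*r^2 := by ring
  -- coefficient norms
  set s : ℂ := 8 + 2*(k:ℂ) with hsdef
  have hn2k : ‖2*(k:ℂ)‖ ≤ 2*(k:ℝ) := by
    rw [norm_mul, Complex.norm_ofNat, Complex.norm_natCast]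
  have hn0 : ‖(0:ℂ)‖ ≤ 0 := by simp
  have hn8 : ‖(-8:ℂ)‖ ≤ 8 := by simp
  have hns : ‖s‖ ≤ 8 + 2*(k:ℝ) := by
    rw [hsdef]
    refine (norm_add_le _ _).trans ?_
    simp
  have hq_le : ‖q‖ ≤ r := le_of_eq hqr
  have hcθ0 : (0:ℝ) ≤ 9*(2:ℝ)^k + 4*(k:ℝ) := by positivity
  -- numerator chain
  have hN0 := mul_approx hq_le hr400 hn2k hn0 hcθ0 (by norm_num) (by norm_num) hθk hX2
  rw [add_zero] at hN0
  have hN : ‖θk*P2^8 - 1 - 2*(k:ℂ)*q‖ ≤ (18*(2:ℝ)^k + 104*(k:ℝ) + 48)*r^2 :=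
    hN0.trans (le_of_eq (by ring))
  rw [mul_comm θk (P2^8)] at hN
  -- D chain
  have hD0 : ‖(1 + s*q) - 1 - s*q‖ ≤ 0*r^2 := by simp
  have hD1 := mul_approx hq_le hr400 hns hn8 (le_refl (0:ℝ)) (by norm_num) (by norm_num) hD0 hb8
  rw [show s + (-8:ℂ) = 2*(k:ℂ) by rw [hsdef]; ring] at hD1
  have hD1' : ‖(1 + s*q)*(1-q)^8 - 1 - 2*(k:ℂ)*q‖ ≤ (2287 + 510*(k:ℝ))*r^2 :=
    hD1.trans (le_of_eq (by ring))
  have hc1 : (0:ℝ) ≤ 2287 + 510*(k:ℝ) := by positivity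
  have hD2 := mul_approx hq_le hr400 hn2k hn0 hc1 (by norm_num) (by norm_num) hD1' hXT
  rw [add_zero] at hD2
  have hD2' : ‖(1 + s*q)*(1-q)^8*XT - 1 - 2*(k:ℂ)*q‖ ≤ (4622 + 1116*(k:ℝ))*r^2 :=
    hD2.trans (le_of_eq (by ring))
  have hc2 : (0:ℝ) ≤ 4622 + 1116*(k:ℝ) := by positivity
  have hD3 := mul_approx hq_le hr400 hn2k hn0 hc2 (by norm_num) (by norm_num) hD2' hX4
  rw [add_zero] at hD3
  have hD3' : ‖(1 + s*q)*(1-q)^8*XT*P4^8 - 1 - 2*(k:ℂ)*q‖ ≤ (9292 + 2328*(k:ℝ))*r^2 :=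
    hD3.trans (le_of_eq (by ring))
  -- W chain
  have hW1 := mul_approx hq_le hr400 hn8 hn0 (by norm_num : (0:ℝ) ≤ 247) (by norm_num)
    (by norm_num) hb8 hXT
  rw [add_zero] at hW1
  have hW1' : ‖(1-q)^8*XT - 1 - (-8:ℂ)*q‖ ≤ 926*r^2 := hW1.trans (le_of_eq (by ring))
  have hW2 := mul_approx hq_le hr400 hn8 hn0 (by norm_num : (0:ℝ) ≤ 926) (by norm_num)
    (by norm_num) hW1' hX4
  rw [add_zero] at hW2
  have hW2' : ‖(1-q)^8*XT*P4^8 - 1 - (-8:ℂ)*q‖ ≤ 2284*r^2 := hW2.trans (le_of_eq (by ring))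
  have hWe : P1^8*P4^8 = (1-q)^8*XT*P4^8 := by rw [hP18]
  have hWapp : ‖P1^8*P4^8 - 1 - (-8:ℂ)*q‖ ≤ 2284*r^2 := by rw [hWe]; exact hW2'
  have hWlow : (1:ℝ)/2 ≤ ‖P1^8*P4^8‖ := by
    have h8q : ‖(-8:ℂ)*q‖ = 8*r := by rw [norm_mul, hqr]; norm_num
    have h1 : ‖P1^8*P4^8 - 1‖ ≤ 2284*r^2 + 8*r := by
      calc ‖P1^8*P4^8 - 1‖ = ‖(P1^8*P4^8 - 1 - (-8:ℂ)*q) + (-8:ℂ)*q‖ := by congr 1; ring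
        _ ≤ ‖P1^8*P4^8 - 1 - (-8:ℂ)*q‖ + ‖(-8:ℂ)*q‖ := norm_add_le _ _
        _ ≤ 2284*r^2 + 8*r := by rw [h8q]; linarith
    have h2a : (2284:ℝ)*r^2 ≤ 2284*(r*(1/400)) := by linarith [hrr]
    have h2 : ‖P1^8*P4^8 - 1‖ ≤ 1/2 := by linarith [hr400]
    have h3 := abs_norm_sub_norm_le (P1^8*P4^8) 1
    rw [norm_one] at h3
    have h4 := abs_le.mp h3
    linarith [h4.1]
  have hW0 : P1^8*P4^8 ≠ 0 := by
    intro h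
    rw [h] at hWlow
    norm_num at hWlow
  -- difference of numerator and shifted denominator
  have hND : ‖P2^8*θk - (1 + s*q)*(P1^8*P4^8)‖ ≤ (18*(2:ℝ)^k + 2432*(k:ℝ) + 9340)*r^2 := by
    have hDe : (1 + s*q)*(P1^8*P4^8) = (1 + s*q)*(1-q)^8*XT*P4^8 := by rw [hWe]; ring
    rw [hDe]
    calc ‖P2^8*θk - (1 + s*q)*(1-q)^8*XT*P4^8‖
        = ‖(P2^8*θk - 1 - 2*(k:ℂ)*q) - ((1 + s*q)*(1-q)^8*XT*P4^8 - 1 - 2*(k:ℂ)*q)‖ := by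
          congr 1; ring
      _ ≤ ‖P2^8*θk - 1 - 2*(k:ℂ)*q‖ + ‖(1 + s*q)*(1-q)^8*XT*P4^8 - 1 - 2*(k:ℂ)*q‖ :=
          norm_sub_le _ _
      _ ≤ (18*(2:ℝ)^k + 104*(k:ℝ) + 48)*r^2 + (9292 + 2328*(k:ℝ))*r^2 := by
          linarith [hN, hD3']
      _ = (18*(2:ℝ)^k + 2432*(k:ℝ) + 9340)*r^2 := by ring
  -- final identity
  have hq0 : q ≠ 0 := by rw [hqdef]; exact Complex.exp_ne_zero _
  have hsplit : f0 k τ - cexp (-(2*(Real.pi:ℂ)*I*τ)) - s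
      = cexp (-(2*(Real.pi:ℂ)*I*τ)) * ((P2^8*θk - (1 + s*q)*(P1^8*P4^8))/(P1^8*P4^8)) := by
    rw [hf0, hqexp, hsdef]
    field_simp
    ring
  rw [hsplit, norm_mul, hqexp, norm_inv, hqr, norm_div]
  have hWn : ‖P2^8*θk - (1 + s*q)*(P1^8*P4^8)‖/‖P1^8*P4^8‖
      ≤ ((18*(2:ℝ)^k + 2432*(k:ℝ) + 9340)*r^2) / (1/2) :=
    div_le_div₀ (by positivity) hND (by norm_num) hWlow
  calc r⁻¹ * (‖P2^8*θk - (1 + s*q)*(P1^8*P4^8)‖/‖P1^8*P4^8‖)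
      ≤ r⁻¹ * (((18*(2:ℝ)^k + 2432*(k:ℝ) + 9340)*r^2) / (1/2)) :=
        mul_le_mul_of_nonneg_left hWn (inv_nonneg.mpr hr0.le)
    _ = (36*(2:ℝ)^k + 4864*(k:ℝ) + 18680) * r := by
        field_simp
        ring
    _ ≤ (36*(2:ℝ)^k + 4864*(k:ℝ) + 18681) * r :=
        mul_le_mul_of_nonneg_right (by linarith) hr0.le
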